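/- Let 𝒜 be a finite nonempty set, μ a translation invariant probability measure on 𝒜^ℤ, and m ≥ 1 an integer. For 1 ≤ k ≤ m set G_k = 2^k ℤ and G_k^− = {j · 2^k : j ∈ ℤ, j < 0}. Then the entropy density s_μ = lim_{n→∞} S({0, …, n−1})/n exists and admits the hierarchical decomposition s_μ = (1/2^m) · S( {0} | G_m^− ) + Σ_{k=1}^m (1/2^k) · S( {2^{k−1}} | ({2^{k−1}} + G_k^−) ∪ G_k ), where conditional entropies with infinite conditioning sets are the limits over growing finite windows. -/

import Mathlib

open MeasureTheory Real Filter Pointwise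

/-- Probability of the cylinder set determined by the configuration `x` on the finite
set `Λ ⊆ ℤ`. -/
noncomputable def cylProb1 {𝒜 : Type*} [MeasurableSpace 𝒜]
    (μ : Measure (ℤ → 𝒜)) (Λ : Finset ℤ) (x : Λ → 𝒜) : ℝ :=
  (μ {ω | ∀ v : Λ, ω v.1 = x v}).toReal

/-- The entropy `S(Λ)` of a finite set of sites `Λ ⊆ ℤ` with respect to `μ`. -/
noncomputable def entS1 {𝒜 : Type*} [Fintype 𝒜] [MeasurableSpace 𝒜]
    (μ : Measure (ℤ → 𝒜)) (Λ : Finset ℤ) : ℝ :=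
  -∑ x : (Λ → 𝒜), cylProb1 μ Λ x * Real.log (cylProb1 μ Λ x)

/-- The conditional entropy `S(Λ | Λ')` (terms with zero probability vanish since
`Real.log 0 = 0` and `0 * log 0 = 0`). -/
noncomputable def condEnt1 {𝒜 : Type*} [Fintype 𝒜] [MeasurableSpace 𝒜]
    (μ : Measure (ℤ → 𝒜)) (Λ Λ' : Finset ℤ) : ℝ :=
  -∑ x : ((Λ ∪ Λ' : Finset ℤ) → 𝒜),
      cylProb1 μ (Λ ∪ Λ') x *
        Real.log (cylProb1 μ (Λ ∪ Λ') x /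
          cylProb1 μ Λ' (fun v => x ⟨v.1, Finset.mem_union_right Λ v.2⟩))

/-- `μ` is translation invariant: it is preserved by the shift `σ`, `(σx)(i) = x(i+1)`. -/
def TransInv1 {𝒜 : Type*} [MeasurableSpace 𝒜] (μ : Measure (ℤ → 𝒜)) : Prop :=
  μ.map (fun ω (i : ℤ) => ω (i + 1)) = μ

open Classical in
/-- The finite set `Λ' ∩ [-n, n]` for a (possibly infinite) `Λ' ⊆ ℤ`. -/
noncomputable def interBox1 (Λ' : Set ℤ) (n : ℕ) : Finset ℤ :=
  (Finset.Icc (-(n : ℤ)) (n : ℤ)).filter (· ∈ Λ')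

/-!
Entropy of finite sets of sites is submodular and, under `μ`, translation invariant. Split
`[0, 2^m M)` into the sites of `2^m ℤ` and, for `1 ≤ k ≤ m`, the sites of `2^(k-1) + 2^k ℤ`. By
the chain rule `S([0, 2^m M))` is the sum, over these sites, of the conditional entropy of a site
given all sites of coarser levels and the earlier sites of its own level. Translated to
`2^(k-1)`, the conditioning set of a level-`k` site lies inside `(2^(k-1) + G_k^-) ∪ G_k` and,
except for the `O(n)` sites nearest the ends of the level, contains the part of that set in
`[-n, n]`. As submodularity makes conditional entropy antitone in the conditioning set, the
average over level `k` tends to the conditional entropy given the infinite set, and level `k`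
holds a fraction `1/2^k` of the sites (the top level `1/2^m`). Finally `S([0, N))/N` converges
by subadditivity, so its limit is the limit along `N = 2^m M`.
-/

open Finset Topology

lemma sum_mul_log_div_nonpos {ι : Type*} [Fintype ι] {p q : ι → ℝ} (hp : ∀ i, 0 ≤ p i)
    (hq : ∀ i, 0 ≤ q i) (hpq : ∀ i, 0 < p i → 0 < q i) (hsum : ∑ i, q i ≤ ∑ i, p i) :
    ∑ i, p i * log (q i / p i) ≤ 0 := by
  have hterm : ∀ i, p i * log (q i / p i) ≤ q i - p i := by
    intro i
    rcases (hp i).eq_or_lt with hpi | hpi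
    · simp [← hpi, hq i]
    · calc p i * log (q i / p i) ≤ p i * (q i / p i - 1) :=
            mul_le_mul_of_nonneg_left (log_le_sub_one_of_pos (div_pos (hpq i hpi) hpi)) hpi.le
        _ = q i - p i := by field_simp
  calc ∑ i, p i * log (q i / p i) ≤ ∑ i, (q i - p i) := sum_le_sum fun i _ => hterm i
    _ ≤ 0 := by rw [sum_sub_distrib]; linarith

lemma card_filter_not_interior_le (B N : ℕ) :
    #{l ∈ range B | ¬(N ≤ l ∧ l + N < B)} ≤ 2 * N := by
  calc #{l ∈ range B | ¬(N ≤ l ∧ l + N < B)} ≤ #(range N ∪ Ico (B - N) B) :=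
        card_le_card fun l hl => by simp only [mem_filter, mem_range] at hl; simp; omega
    _ ≤ #(range N) + #(Ico (B - N) B) := card_union_le _ _
    _ ≤ 2 * N := by simp; omega

lemma sum_range_le_of_interior_le {f : ℕ → ℝ} {B N : ℕ} {a C : ℝ} (hC : 0 ≤ C)
    (hf : ∀ l < B, f l ≤ a + C) (hfa : ∀ l, N ≤ l → l + N < B → f l ≤ a) :
    ∑ l ∈ range B, f l ≤ a * B + 2 * N * C := by
  have hterm : ∀ l ∈ range B, f l ≤ a + if ¬(N ≤ l ∧ l + N < B) then C else 0 := by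
    intro l hl
    split_ifs with h
    · simpa using hfa l h.1 h.2
    · exact hf l (mem_range.1 hl)
  have hcard : (#{l ∈ range B | ¬(N ≤ l ∧ l + N < B)} : ℝ) ≤ 2 * N := by
    exact_mod_cast card_filter_not_interior_le B N
  calc ∑ l ∈ range B, f l
      ≤ ∑ l ∈ range B, (a + if ¬(N ≤ l ∧ l + N < B) then C else 0) := sum_le_sum hterm
    _ = a * B + #{l ∈ range B | ¬(N ≤ l ∧ l + N < B)} * C := by
      rw [sum_add_distrib, ← sum_filter, sum_const, sum_const, card_range, nsmul_eq_mul,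
        nsmul_eq_mul]
      ring
    _ ≤ a * B + 2 * N * C := by gcongr

theorem tendsto_sum_div_of_interior_le {f : ℕ → ℕ → ℝ} {g : ℕ → ℝ} {L K : ℝ}
    (hg : Antitone g) (hgL : Tendsto g atTop (𝓝 L))
    (hLf : ∀ B l, l < B → L ≤ f B l) (hfK : ∀ B l, l < B → f B l ≤ K)
    (hfg : ∀ n, ∃ N, ∀ B l, N ≤ l → l + N < B → f B l ≤ g n) :
    Tendsto (fun B : ℕ => (∑ l ∈ range B, f B l) / B) atTop (𝓝 L) := by
  have hlower : ∀ B : ℕ, 0 < B → L ≤ (∑ l ∈ range B, f B l) / B := by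
    intro B hB
    rw [le_div_iff₀ (by positivity)]
    calc L * B = ∑ _l ∈ range B, L := by simp [mul_comm]
      _ ≤ _ := sum_le_sum fun l hl => hLf B l (mem_range.1 hl)
  have hupper : ∀ n, ∃ N : ℕ, ∀ B : ℕ, 0 < B →
      (∑ l ∈ range B, f B l) / B ≤ g n + 2 * N * (K - L) / B := by
    intro n
    obtain ⟨N, hN⟩ := hfg n
    refine ⟨N, fun B hB => ?_⟩
    rw [div_le_iff₀ (by positivity), add_mul, div_mul_cancel₀ _ (by positivity)]
    refine sum_range_le_of_interior_le (sub_nonneg.2 ((hLf 1 0 one_pos).trans (hfK 1 0 one_pos)))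
      (fun l hl => ?_) (hN B)
    linarith [hfK B l hl, hg.le_of_tendsto hgL n]
  refine tendsto_order.2 ⟨fun a ha => ?_, fun a ha => ?_⟩
  · filter_upwards [eventually_gt_atTop 0] with B hB using ha.trans_le (hlower B hB)
  · obtain ⟨n, hn⟩ := (hgL.eventually (gt_mem_nhds ha)).exists
    obtain ⟨N, hN⟩ := hupper n
    have hlim : Tendsto (fun B : ℕ => g n + 2 * N * (K - L) / B) atTop (𝓝 (g n)) := by
      simpa using tendsto_const_nhds.add (tendsto_const_div_atTop_nhds_zero_nat (2 * N * (K - L)))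
    filter_upwards [eventually_gt_atTop 0, hlim.eventually (gt_mem_nhds hn)] with B hB hB'
    exact (hN B hB).trans_lt hB'

lemma mem_image_sub_right_iff {s : Finset ℤ} {a x : ℤ} : x ∈ s.image (· - a) ↔ x + a ∈ s := by
  simp [sub_eq_iff_eq_add]

def restrictCfg {𝒜 : Type*} {Λ Λ' : Finset ℤ} (h : Λ ⊆ Λ') (x : Λ' → 𝒜) : Λ → 𝒜 :=
  fun v => x ⟨v, h v.2⟩

section Cylinder

variable {𝒜 : Type*} [MeasurableSpace 𝒜] (μ : Measure (ℤ → 𝒜))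

lemma measurableSet_cyl [MeasurableSingletonClass 𝒜] (Λ : Finset ℤ) (x : Λ → 𝒜) :
    MeasurableSet {ω : ℤ → 𝒜 | ∀ v : Λ, ω v = x v} := by
  rw [Set.ofPred_forall]
  exact .iInter fun v => (measurableSet_singleton (x v)).preimage (measurable_pi_apply (v : ℤ))

lemma cylProb1_nonneg (Λ : Finset ℤ) (x : Λ → 𝒜) : 0 ≤ cylProb1 μ Λ x :=
  ENNReal.toReal_nonneg

lemma cylProb1_le_one [IsProbabilityMeasure μ] (Λ : Finset ℤ) (x : Λ → 𝒜) :
    cylProb1 μ Λ x ≤ 1 :=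
  measureReal_le_one

variable [IsFiniteMeasure μ]

lemma cylProb1_le_restrictCfg {Λ Λ' : Finset ℤ} (h : Λ ⊆ Λ') (x : Λ' → 𝒜) :
    cylProb1 μ Λ' x ≤ cylProb1 μ Λ (restrictCfg h x) :=
  measureReal_mono fun _ hω v => hω ⟨v, h v.2⟩

lemma cylProb1_restrictCfg_pos {Λ Λ' : Finset ℤ} (h : Λ ⊆ Λ') {x : Λ' → 𝒜}
    (hx : 0 < cylProb1 μ Λ' x) : 0 < cylProb1 μ Λ (restrictCfg h x) :=
  hx.trans_le (cylProb1_le_restrictCfg μ h x)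

variable [Fintype 𝒜] [MeasurableSingletonClass 𝒜]

open Classical in
lemma cylProb1_eq_sum_restrictCfg {Λ Λ' : Finset ℤ} (h : Λ ⊆ Λ') (x : Λ → 𝒜) :
    cylProb1 μ Λ x = ∑ y with restrictCfg h y = x, cylProb1 μ Λ' y := by
  set fiber : Finset (Λ' → 𝒜) := {y | restrictCfg h y = x}
  have hcyl : {ω : ℤ → 𝒜 | ∀ v : Λ, ω v = x v}
      = ⋃ y ∈ fiber, {ω : ℤ → 𝒜 | ∀ v : Λ', ω v = y v} := by
    ext ω
    simp only [Set.mem_ofPred_eq, Set.mem_iUnion, fiber, mem_filter, mem_univ, true_and,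
      exists_prop]
    refine ⟨fun hω => ⟨fun v => ω v, funext fun v => (hω v).symm ▸ rfl, fun v => rfl⟩, ?_⟩
    rintro ⟨y, rfl, hω⟩ v
    exact hω ⟨v, h v.2⟩
  have hdisj : Set.PairwiseDisjoint (fiber : Set (Λ' → 𝒜))
      fun y => {ω : ℤ → 𝒜 | ∀ v : Λ', ω v = y v} :=
    fun y _ y' _ hne => Set.disjoint_left.2 fun ω hy hy' =>
      hne (funext fun v => (hy v).symm.trans (hy' v))
  rw [cylProb1, ← measureReal_def, hcyl,
    measureReal_biUnion_finset hdisj fun y _ => measurableSet_cyl Λ' y]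
  rfl

lemma sum_cylProb1_mul_restrictCfg {Λ Λ' : Finset ℤ} (h : Λ ⊆ Λ') (g : (Λ → 𝒜) → ℝ) :
    ∑ y : Λ' → 𝒜, cylProb1 μ Λ' y * g (restrictCfg h y) = ∑ x : Λ → 𝒜, cylProb1 μ Λ x * g x := by
  classical
  rw [← sum_fiberwise univ (restrictCfg h)]
  refine sum_congr rfl fun x _ => ?_
  rw [cylProb1_eq_sum_restrictCfg μ h x, sum_mul]
  exact sum_congr rfl fun y hy => by rw [(mem_filter.1 hy).2]

end Cylinder

section Entropy

variable {𝒜 : Type*} [Fintype 𝒜] [MeasurableSpace 𝒜] (μ : Measure (ℤ → 𝒜))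

lemma entS1_nonneg [IsProbabilityMeasure μ] (Λ : Finset ℤ) : 0 ≤ entS1 μ Λ := by
  rw [entS1, neg_nonneg]
  exact sum_nonpos fun x _ => mul_log_nonpos (cylProb1_nonneg μ Λ x) (cylProb1_le_one μ Λ x)

lemma entS1_empty [IsProbabilityMeasure μ] : entS1 μ ∅ = 0 := by
  simp [entS1, cylProb1]

lemma condEnt1_nonneg [IsFiniteMeasure μ] (Λ Λ' : Finset ℤ) : 0 ≤ condEnt1 μ Λ Λ' := by
  have hsub : Λ' ⊆ Λ ∪ Λ' := subset_union_right
  rw [condEnt1, neg_nonneg]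
  refine sum_nonpos fun y _ => ?_
  rcases (cylProb1_nonneg μ _ y).eq_or_lt with hy | hy
  · simp [← hy]
  · exact mul_nonpos_of_nonneg_of_nonpos hy.le <|
      log_nonpos (div_nonneg hy.le (cylProb1_nonneg μ _ _)) <|
      div_le_one_of_le₀ (cylProb1_le_restrictCfg μ hsub y) (cylProb1_nonneg μ _ _)

variable [MeasurableSingletonClass 𝒜]

lemma sum_cylProb1 [IsProbabilityMeasure μ] (Λ : Finset ℤ) : ∑ x : Λ → 𝒜, cylProb1 μ Λ x = 1 := by
  simpa [cylProb1] using sum_cylProb1_mul_restrictCfg μ (empty_subset Λ) fun _ => 1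

variable [IsFiniteMeasure μ]

lemma condEnt1_eq_sub (Λ Λ' : Finset ℤ) :
    condEnt1 μ Λ Λ' = entS1 μ (Λ ∪ Λ') - entS1 μ Λ' := by
  have hsub : Λ' ⊆ Λ ∪ Λ' := subset_union_right
  have hterm : ∀ y : (Λ ∪ Λ' : Finset ℤ) → 𝒜,
      cylProb1 μ _ y * log (cylProb1 μ _ y / cylProb1 μ Λ' (restrictCfg hsub y))
        = cylProb1 μ _ y * log (cylProb1 μ _ y)
          - cylProb1 μ _ y * log (cylProb1 μ Λ' (restrictCfg hsub y)) := by
    intro y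
    rcases (cylProb1_nonneg μ _ y).eq_or_lt with hy | hy
    · simp [← hy]
    · rw [log_div hy.ne' (cylProb1_restrictCfg_pos μ hsub hy).ne', mul_sub]
  change -∑ y, cylProb1 μ _ y * log (cylProb1 μ _ y / cylProb1 μ Λ' (restrictCfg hsub y)) = _
  rw [sum_congr rfl fun y _ => hterm y, sum_sub_distrib,
    sum_cylProb1_mul_restrictCfg μ hsub fun x => log (cylProb1 μ Λ' x), entS1, entS1]
  ring

lemma entS1_mono {Λ Λ' : Finset ℤ} (h : Λ ⊆ Λ') : entS1 μ Λ ≤ entS1 μ Λ' := by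
  have := condEnt1_nonneg μ Λ' Λ
  rwa [condEnt1_eq_sub, union_eq_left.2 h, sub_nonneg] at this

open Classical in
lemma sum_cylProb1_restrictCfg_fiber_le (A B : Finset ℤ) (x : A → 𝒜) :
    ∑ y with restrictCfg (subset_union_left (s₂ := B)) y = x,
        cylProb1 μ B (restrictCfg subset_union_right y)
      ≤ cylProb1 μ (A ∩ B) (restrictCfg inter_subset_left x) := by
  set fiber : Finset ((A ∪ B : Finset ℤ) → 𝒜) :=
    {y | restrictCfg (subset_union_left (s₂ := B)) y = x}
  have hinj : Set.InjOn (restrictCfg (𝒜 := 𝒜) (subset_union_right (s₁ := A) (s₂ := B))) fiber := by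
    intro y hy y' hy' hyy'
    have hA : restrictCfg subset_union_left y = restrictCfg subset_union_left y' :=
      (mem_filter.1 hy).2.trans (mem_filter.1 hy').2.symm
    funext v
    rcases mem_union.1 v.2 with hv | hv
    · exact congrFun hA ⟨v, hv⟩
    · exact congrFun hyy' ⟨v, hv⟩
  rw [cylProb1_eq_sum_restrictCfg μ inter_subset_right, ← sum_image hinj]
  refine sum_le_sum_of_subset_of_nonneg (fun z hz => ?_) fun z _ _ => cylProb1_nonneg μ B z
  obtain ⟨y, hy, rfl⟩ := mem_image.1 hz
  refine mem_filter.2 ⟨mem_univ _, ?_⟩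
  rw [← (mem_filter.1 hy).2]
  rfl

end Entropy

section Submodular

variable {𝒜 : Type*} [Fintype 𝒜] [MeasurableSpace 𝒜] [MeasurableSingletonClass 𝒜]
  (μ : Measure (ℤ → 𝒜)) [IsProbabilityMeasure μ]

lemma sum_cylProb1_mul_div_cylProb1_inter_le_one (A B : Finset ℤ) :
    ∑ y : (A ∪ B : Finset ℤ) → 𝒜, cylProb1 μ A (restrictCfg subset_union_left y)
        * cylProb1 μ B (restrictCfg subset_union_right y)
        / cylProb1 μ (A ∩ B) (restrictCfg (inter_subset_left.trans subset_union_left) y) ≤ 1 := by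
  classical
  rw [← sum_cylProb1 μ A, ← sum_fiberwise univ (restrictCfg subset_union_left)]
  refine sum_le_sum fun x _ => ?_
  have hfiber : ∀ y ∈ ({y | restrictCfg subset_union_left y = x} : Finset _),
      cylProb1 μ A (restrictCfg subset_union_left y)
        * cylProb1 μ B (restrictCfg subset_union_right y)
        / cylProb1 μ (A ∩ B) (restrictCfg (inter_subset_left.trans subset_union_left) y)
      = cylProb1 μ A x / cylProb1 μ (A ∩ B) (restrictCfg inter_subset_left x)
        * cylProb1 μ B (restrictCfg subset_union_right y) := by
    intro y hy
    rw [← (mem_filter.1 hy).2]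
    exact mul_div_right_comm _ _ _
  rw [sum_congr rfl hfiber, ← mul_sum]
  calc _ ≤ cylProb1 μ A x / cylProb1 μ (A ∩ B) (restrictCfg inter_subset_left x)
          * cylProb1 μ (A ∩ B) (restrictCfg inter_subset_left x) :=
        mul_le_mul_of_nonneg_left (sum_cylProb1_restrictCfg_fiber_le μ A B x)
          (div_nonneg (cylProb1_nonneg μ _ _) (cylProb1_nonneg μ _ _))
    _ = cylProb1 μ A x := div_mul_cancel_of_imp fun h0 =>
        le_antisymm (h0 ▸ cylProb1_le_restrictCfg μ inter_subset_left x) (cylProb1_nonneg μ A x)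

lemma entS1_union_add_entS1_inter_le (A B : Finset ℤ) :
    entS1 μ (A ∪ B) + entS1 μ (A ∩ B) ≤ entS1 μ A + entS1 μ B := by
  have hA : A ⊆ A ∪ B := subset_union_left
  have hB : B ⊆ A ∪ B := subset_union_right
  have hI : A ∩ B ⊆ A ∪ B := inter_subset_left.trans hA
  set p := cylProb1 μ (A ∪ B)
  set pA := fun y => cylProb1 μ A (restrictCfg hA y)
  set pB := fun y => cylProb1 μ B (restrictCfg hB y)
  set pI := fun y => cylProb1 μ (A ∩ B) (restrictCfg hI y)
  -- Gibbs' inequality for `p` against the sub-probability `pA * pB / pI`.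
  have hgibbs : ∑ y, p y * log (pA y * pB y / pI y / p y) ≤ 0 :=
    sum_mul_log_div_nonpos (cylProb1_nonneg μ _)
    (fun y => div_nonneg (mul_nonneg (cylProb1_nonneg μ _ _) (cylProb1_nonneg μ _ _))
      (cylProb1_nonneg μ _ _))
    (fun y hy => div_pos (mul_pos (cylProb1_restrictCfg_pos μ hA hy)
      (cylProb1_restrictCfg_pos μ hB hy)) (cylProb1_restrictCfg_pos μ hI hy))
    ((sum_cylProb1_mul_div_cylProb1_inter_le_one μ A B).trans_eq (sum_cylProb1 μ _).symm)
  have hterm : ∀ y, p y * log (pA y * pB y / pI y / p y)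
      = p y * log (pA y) + p y * log (pB y) - p y * log (pI y) - p y * log (p y) := by
    intro y
    rcases (cylProb1_nonneg μ _ y).eq_or_lt with hy | hy
    · simp [p, ← hy]
    · have hA' := cylProb1_restrictCfg_pos μ hA hy
      have hB' := cylProb1_restrictCfg_pos μ hB hy
      have hI' := cylProb1_restrictCfg_pos μ hI hy
      rw [log_div (by positivity) hy.ne', log_div (by positivity) hI'.ne',
        log_mul hA'.ne' hB'.ne']
      ring
  simp only [hterm, sum_sub_distrib, sum_add_distrib] at hgibbs
  simp only [p, pA, pB, pI,
    sum_cylProb1_mul_restrictCfg μ hA fun x => log (cylProb1 μ A x),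
    sum_cylProb1_mul_restrictCfg μ hB fun x => log (cylProb1 μ B x),
    sum_cylProb1_mul_restrictCfg μ hI fun x => log (cylProb1 μ (A ∩ B) x)] at hgibbs
  simp only [entS1]
  linarith

lemma entS1_union_le (A B : Finset ℤ) : entS1 μ (A ∪ B) ≤ entS1 μ A + entS1 μ B := by
  linarith [entS1_union_add_entS1_inter_le μ A B, entS1_nonneg μ (A ∩ B)]

lemma condEnt1_le_entS1 (A B : Finset ℤ) : condEnt1 μ A B ≤ entS1 μ A := by
  rw [condEnt1_eq_sub]
  linarith [entS1_union_le μ A B]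

lemma condEnt1_anti_right {A B B' : Finset ℤ} (h : B ⊆ B') :
    condEnt1 μ A B' ≤ condEnt1 μ A B := by
  have hsub := entS1_union_add_entS1_inter_le μ (A ∪ B) B'
  have hmono : entS1 μ B ≤ entS1 μ ((A ∪ B) ∩ B') :=
    entS1_mono μ fun v hv => mem_inter.2 ⟨mem_union_right A hv, h hv⟩
  rw [union_assoc, union_eq_right.2 h] at hsub
  rw [condEnt1_eq_sub, condEnt1_eq_sub]
  linarith

end Submodular

section Translation

variable {𝒜 : Type*}

def shiftMap (a : ℤ) (ω : ℤ → 𝒜) : ℤ → 𝒜 := fun i => ω (i + a)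

lemma shiftMap_comp (a b : ℤ) : shiftMap (𝒜 := 𝒜) a ∘ shiftMap b = shiftMap (a + b) := by
  funext ω i
  simp [shiftMap, add_assoc]

variable [MeasurableSpace 𝒜] (μ : Measure (ℤ → 𝒜))

lemma measurable_shiftMap (a : ℤ) : Measurable (shiftMap (𝒜 := 𝒜) a) :=
  measurable_pi_lambda _ fun _ => measurable_pi_apply _

lemma map_shiftMap (hinv : TransInv1 μ) (a : ℤ) : μ.map (shiftMap a) = μ := by
  have h1 : μ.map (shiftMap 1) = μ := hinv
  have hmap : ∀ a b : ℤ, (μ.map (shiftMap b)).map (shiftMap a) = μ.map (shiftMap (a + b)) :=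
    fun a b => by
      rw [Measure.map_map (measurable_shiftMap a) (measurable_shiftMap b), shiftMap_comp]
  induction a using Int.induction_on with
  | zero =>
    have h0 : shiftMap (𝒜 := 𝒜) 0 = id := by funext ω i; simp [shiftMap]
    rw [h0, Measure.map_id]
  | succ n ih => rw [add_comm, ← hmap, ih, h1]
  | pred n ih =>
    have h := hmap (-n - 1) 1
    rwa [h1, sub_add_cancel, ih] at h

variable [MeasurableSingletonClass 𝒜]

lemma cylProb1_image_add (hinv : TransInv1 μ) (a : ℤ) (Λ : Finset ℤ)
    (x : Λ.image (· + a) → 𝒜) :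
    cylProb1 μ (Λ.image (· + a)) x = cylProb1 μ Λ fun v => x ⟨v + a, mem_image_of_mem _ v.2⟩ := by
  have hpre : shiftMap (-a) ⁻¹' {ω : ℤ → 𝒜 | ∀ w : Λ.image (· + a), ω w = x w}
      = {ω | ∀ v : Λ, ω v = x ⟨v + a, mem_image_of_mem _ v.2⟩} := by
    ext ω
    simp only [Set.mem_preimage, Set.mem_ofPred_eq, shiftMap]
    refine ⟨fun hω v => by simpa using hω ⟨v + a, mem_image_of_mem _ v.2⟩, fun hω w => ?_⟩
    obtain ⟨v, hv, hvw⟩ := mem_image.1 w.2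
    have hw : w = ⟨v + a, mem_image_of_mem _ hv⟩ := Subtype.ext hvw.symm
    rw [hw, ← hω ⟨v, hv⟩, add_neg_cancel_right]
  rw [cylProb1, cylProb1, ← hpre, ← Measure.map_apply (measurable_shiftMap _)
    (measurableSet_cyl _ x), map_shiftMap μ hinv]

variable [Fintype 𝒜]

lemma entS1_image_add (hinv : TransInv1 μ) (a : ℤ) (Λ : Finset ℤ) :
    entS1 μ (Λ.image (· + a)) = entS1 μ Λ := by
  let e : Λ ≃ Λ.image (· + a) := (Equiv.addRight a).subtypeEquiv fun v => by simp
  rw [entS1, entS1, Fintype.sum_equiv (e.arrowCongr (Equiv.refl 𝒜)).symm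
    (fun x => cylProb1 μ _ x * log (cylProb1 μ _ x))
    (fun y => cylProb1 μ Λ y * log (cylProb1 μ Λ y)) fun x => by
      rw [cylProb1_image_add μ hinv]; rfl]

variable [IsFiniteMeasure μ]

lemma condEnt1_image_add (hinv : TransInv1 μ) (a : ℤ) (Λ Λ' : Finset ℤ) :
    condEnt1 μ (Λ.image (· + a)) (Λ'.image (· + a)) = condEnt1 μ Λ Λ' := by
  rw [condEnt1_eq_sub, condEnt1_eq_sub, ← image_union, entS1_image_add μ hinv,
    entS1_image_add μ hinv]

lemma condEnt1_singleton_add (hinv : TransInv1 μ) (s a : ℤ) (Λ' : Finset ℤ) :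
    condEnt1 μ {s + a} Λ' = condEnt1 μ {s} (Λ'.image (· - a)) := by
  simpa [image_image, Function.comp_def] using condEnt1_image_add μ hinv a {s} (Λ'.image (· - a))

end Translation

section InfiniteConditioning

lemma mem_interBox1 {Λ' : Set ℤ} {n : ℕ} {x : ℤ} :
    x ∈ interBox1 Λ' n ↔ (-(n : ℤ) ≤ x ∧ x ≤ n) ∧ x ∈ Λ' := by
  simp [interBox1]

lemma interBox1_mono (Λ' : Set ℤ) : Monotone (interBox1 Λ') := fun n n' h x hx => by
  rw [mem_interBox1] at hx ⊢
  exact ⟨⟨by omega, by omega⟩, hx.2⟩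

lemma exists_subset_interBox1 {Λ' : Set ℤ} {F : Finset ℤ} (hF : ↑F ⊆ Λ') :
    ∃ n, F ⊆ interBox1 Λ' n :=
  ⟨F.sup Int.natAbs, fun x hx => mem_interBox1.2
    ⟨by have := le_sup (f := Int.natAbs) hx; omega, hF hx⟩⟩

variable {𝒜 : Type*} [Fintype 𝒜] [MeasurableSpace 𝒜] (μ : Measure (ℤ → 𝒜))

noncomputable def condEntLim (Λ : Finset ℤ) (Λ' : Set ℤ) : ℝ :=
  ⨅ n, condEnt1 μ Λ (interBox1 Λ' n)

variable [MeasurableSingletonClass 𝒜] [IsProbabilityMeasure μ] (Λ : Finset ℤ) (Λ' : Set ℤ)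

lemma antitone_condEnt1_interBox1 : Antitone fun n => condEnt1 μ Λ (interBox1 Λ' n) :=
  fun _ _ h => condEnt1_anti_right μ (interBox1_mono Λ' h)

lemma tendsto_condEnt1_interBox1 :
    Tendsto (fun n => condEnt1 μ Λ (interBox1 Λ' n)) atTop (𝓝 (condEntLim μ Λ Λ')) :=
  tendsto_atTop_ciInf (antitone_condEnt1_interBox1 μ Λ Λ')
    ⟨0, by rintro _ ⟨n, rfl⟩; exact condEnt1_nonneg μ _ _⟩

lemma condEntLim_le_condEnt1 {F : Finset ℤ} (hF : ↑F ⊆ Λ') :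
    condEntLim μ Λ Λ' ≤ condEnt1 μ Λ F := by
  obtain ⟨n, hn⟩ := exists_subset_interBox1 hF
  exact ((antitone_condEnt1_interBox1 μ Λ Λ').le_of_tendsto
    (tendsto_condEnt1_interBox1 μ Λ Λ') n).trans (condEnt1_anti_right μ hn)

end InfiniteConditioning

section Progression

def progression (t p : ℤ) (B : ℕ) : Finset ℤ := (range B).image fun l : ℕ => t + l * p

open Classical in
noncomputable def periodicBlock (E : Set ℤ) (p : ℤ) (B : ℕ) : Finset ℤ :=
  (Ico 0 (B * p)).filter (· ∈ E)

def negProgression (t p : ℤ) : Set ℤ := {x | ∃ j : ℤ, j < 0 ∧ x = t + j * p}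

lemma mem_progression {t p x : ℤ} {B : ℕ} : x ∈ progression t p B ↔ ∃ l < B, t + l * p = x := by
  simp [progression]

lemma mem_periodicBlock {E : Set ℤ} {p x : ℤ} {B : ℕ} :
    x ∈ periodicBlock E p B ↔ (0 ≤ x ∧ x < B * p) ∧ x ∈ E := by
  simp [periodicBlock]

/-- The conditioning set of the site `t + l p` in the chain rule for `entropyGain`, translated
by `-l p`. -/
noncomputable def shiftedPast (E : Set ℤ) (p t : ℤ) (B l : ℕ) : Finset ℤ :=
  (periodicBlock E p B ∪ progression t p l).image (· - l * p)

lemma mem_shiftedPast {E : Set ℤ} {p t x : ℤ} {B l : ℕ} :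
    x ∈ shiftedPast E p t B l ↔ ((0 ≤ x + l * p ∧ x + l * p < B * p) ∧ x + l * p ∈ E)
      ∨ ∃ i < l, t + i * p = x + l * p := by
  rw [shiftedPast, mem_image_sub_right_iff, mem_union, mem_periodicBlock, mem_progression]

lemma shiftedPast_subset {E : Set ℤ} {p : ℤ} (hE : Function.Periodic (· ∈ E) p) (t : ℤ)
    (B l : ℕ) : ↑(shiftedPast E p t B l) ⊆ negProgression t p ∪ E := fun x hx => by
  rcases mem_shiftedPast.1 hx with ⟨-, hxE⟩ | ⟨i, hi, hix⟩
  · exact Or.inr ((hE.int_mul l x).mp hxE)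
  · exact Or.inl ⟨i - l, by omega, by linear_combination -hix⟩

lemma interBox1_subset_shiftedPast {E : Set ℤ} {p t : ℤ} {B l n : ℕ} (hp : 0 < p)
    (hE : Function.Periodic (· ∈ E) p) (hl : n + t.natAbs ≤ l) (hlB : l + n < B) :
    interBox1 (negProgression t p ∪ E) n ⊆ shiftedPast E p t B l := fun x hx => by
  obtain ⟨⟨hxn, hxn'⟩, hxT⟩ := mem_interBox1.1 hx
  have hlp : (l : ℤ) ≤ l * p := le_mul_of_one_le_right (by positivity) hp
  rw [mem_shiftedPast]
  rcases hxT with ⟨j, hj, rfl⟩ | hxE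
  · have hjp : j * p ≤ j := mul_le_of_one_le_right hj.le hp
    refine Or.inr ⟨(l + j).toNat, by omega, ?_⟩
    rw [Int.toNat_of_nonneg (by omega)]
    ring
  · have hBl : ((B - l : ℕ) : ℤ) ≤ (B - l : ℕ) * p := le_mul_of_one_le_right (by positivity) hp
    push_cast [show l ≤ B by omega] at hBl
    have hnB : (n : ℤ) + l < B := by omega
    exact Or.inl ⟨⟨by omega, by linarith⟩, (hE.int_mul l x).mpr hxE⟩

variable {𝒜 : Type*} [Fintype 𝒜] [MeasurableSpace 𝒜] (μ : Measure (ℤ → 𝒜))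

noncomputable def entropyGain (E : Set ℤ) (p t : ℤ) (B : ℕ) : ℝ :=
  entS1 μ (periodicBlock E p B ∪ progression t p B) - entS1 μ (periodicBlock E p B)

variable [MeasurableSingletonClass 𝒜] [IsProbabilityMeasure μ]

lemma entS1_union_image_range (C : Finset ℤ) (s : ℕ → ℤ) (J : ℕ) :
    entS1 μ (C ∪ (range J).image s)
      = entS1 μ C + ∑ j ∈ range J, condEnt1 μ {s j} (C ∪ (range j).image s) := by
  induction J with
  | zero => simp
  | succ J ih =>
    rw [sum_range_succ, range_add_one, image_insert, union_insert, insert_eq, condEnt1_eq_sub, ih]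
    ring

theorem tendsto_entropyGain_div (hinv : TransInv1 μ) {E : Set ℤ} {p : ℤ} (hp : 0 < p)
    (hE : Function.Periodic (· ∈ E) p) (t : ℤ) :
    Tendsto (fun B : ℕ => entropyGain μ E p t B / B) atTop
      (𝓝 (condEntLim μ {t} (negProgression t p ∪ E))) := by
  have hsum : ∀ B, entropyGain μ E p t B
      = ∑ l ∈ range B, condEnt1 μ {t} (shiftedPast E p t B l) := fun B => by
    rw [entropyGain, progression, entS1_union_image_range, add_sub_cancel_left]
    exact sum_congr rfl fun l _ => condEnt1_singleton_add μ hinv t _ _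
  simp only [hsum]
  exact tendsto_sum_div_of_interior_le (K := entS1 μ {t})
    (antitone_condEnt1_interBox1 μ _ _) (tendsto_condEnt1_interBox1 μ _ _)
    (fun B l _ => condEntLim_le_condEnt1 μ _ _ (shiftedPast_subset hE t B l))
    (fun B l _ => condEnt1_le_entS1 μ _ _)
    fun n => ⟨n + t.natAbs, fun B l hl hlB =>
      condEnt1_anti_right μ (interBox1_subset_shiftedPast hp hE (by omega) (by omega))⟩

end Progression

section Dyadic

lemma progression_zero_one (N : ℕ) : progression 0 1 N = Ico 0 (N : ℤ) := by
  ext x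
  simp only [mem_progression, mem_Ico, zero_add, mul_one]
  refine ⟨fun ⟨l, hl, hlx⟩ => by omega, fun ⟨h0, hN⟩ => ⟨x.toNat, by omega, by omega⟩⟩

lemma progression_zero_two_mul (p : ℤ) (B : ℕ) :
    progression 0 p (2 * B) = progression 0 (2 * p) B ∪ progression p (2 * p) B := by
  ext x
  simp only [mem_union, mem_progression, zero_add]
  constructor
  · rintro ⟨i, hi, rfl⟩
    obtain ⟨q, rfl | rfl⟩ := Nat.even_or_odd' i
    · exact Or.inl ⟨q, by omega, by push_cast; ring⟩
    · exact Or.inr ⟨q, by omega, by push_cast; ring⟩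
  · rintro (⟨q, hq, rfl⟩ | ⟨q, hq, rfl⟩)
    · exact ⟨2 * q, by omega, by push_cast; ring⟩
    · exact ⟨2 * q + 1, by omega, by push_cast; ring⟩

lemma periodicBlock_multiples {p : ℤ} (hp : 0 < p) (B : ℕ) :
    periodicBlock {x | ∃ j : ℤ, x = j * p} p B = progression 0 p B := by
  ext x
  rw [mem_periodicBlock, mem_progression]
  constructor
  · rintro ⟨⟨h0, hB⟩, j, rfl⟩
    have hj : 0 ≤ j := nonneg_of_mul_nonneg_left h0 hp
    exact ⟨j.toNat, by have := lt_of_mul_lt_mul_right hB hp.le; omega, by simp [hj]⟩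
  · rintro ⟨l, hl, rfl⟩
    exact ⟨⟨by positivity, by rw [zero_add]; gcongr⟩, l, zero_add _⟩

lemma periodicBlock_empty (p : ℤ) (B : ℕ) : periodicBlock ∅ p B = ∅ := by
  simp [periodicBlock]

lemma periodic_mem_multiples (p : ℤ) : Function.Periodic (· ∈ {x : ℤ | ∃ j : ℤ, x = j * p}) p :=
  fun x => propext ⟨fun ⟨j, hj⟩ => ⟨j - 1, by linear_combination hj⟩,
    fun ⟨j, hj⟩ => ⟨j + 1, by linear_combination hj⟩⟩

variable {𝒜 : Type*} [Fintype 𝒜] [MeasurableSpace 𝒜] (μ : Measure (ℤ → 𝒜))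

lemma entS1_progression_two_mul (k B : ℕ) :
    entS1 μ (progression 0 (2 ^ k) (2 * B)) = entS1 μ (progression 0 (2 ^ (k + 1)) B)
      + entropyGain μ {x | ∃ j : ℤ, x = j * 2 ^ (k + 1)} (2 ^ (k + 1)) (2 ^ k) B := by
  rw [entropyGain, periodicBlock_multiples (by positivity), progression_zero_two_mul, ← pow_succ']
  ring

lemma entS1_progression_eq_add_sum_entropyGain (m M : ℕ) :
    entS1 μ (progression 0 1 (2 ^ m * M)) = entS1 μ (progression 0 (2 ^ m) M)
      + ∑ k ∈ Icc 1 m,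
          entropyGain μ {x | ∃ j : ℤ, x = j * 2 ^ k} (2 ^ k) (2 ^ (k - 1)) (2 ^ (m - k) * M) := by
  induction m generalizing M with
  | zero => simp
  | succ m ih =>
    have hsum : ∀ k ∈ Icc 1 m, 2 ^ (m - k) * (2 * M) = 2 ^ (m + 1 - k) * M := fun k hk => by
      rw [show m + 1 - k = m - k + 1 by simp at hk; omega, pow_succ]
      ring
    rw [show 2 ^ (m + 1) * M = 2 ^ m * (2 * M) by ring, ih, entS1_progression_two_mul,
      sum_Icc_succ_top (by omega), sum_congr rfl fun k hk => by rw [hsum k hk]]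
    simp only [Nat.add_sub_cancel, Nat.sub_self, pow_zero, one_mul]
    ring

lemma entS1_progression_eq_entropyGain_empty [IsProbabilityMeasure μ] (p : ℤ) (B : ℕ) :
    entS1 μ (progression 0 p B) = entropyGain μ ∅ p 0 B := by
  rw [entropyGain, periodicBlock_empty, empty_union, entS1_empty, sub_zero]

lemma entS1_Ico_div_eq_sum [IsProbabilityMeasure μ] (m M : ℕ) (hM : 0 < M) :
    entS1 μ (Ico 0 ((2 ^ m * M : ℕ) : ℤ)) / ((2 ^ m * M : ℕ) : ℝ)
      = 1 / 2 ^ m * (entropyGain μ ∅ (2 ^ m) 0 M / M)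
        + ∑ k ∈ Icc 1 m, 1 / 2 ^ k *
          (entropyGain μ {x | ∃ j : ℤ, x = j * 2 ^ k} (2 ^ k) (2 ^ (k - 1)) (2 ^ (m - k) * M)
            / ((2 ^ (m - k) * M : ℕ) : ℝ)) := by
  have hpow : ∀ k ∈ Icc 1 m, ((2 ^ m * M : ℕ) : ℝ) = 2 ^ k * ((2 ^ (m - k) * M : ℕ) : ℝ) :=
    fun k hk => by
      push_cast
      rw [← mul_assoc, ← pow_add, Nat.add_sub_cancel' (mem_Icc.1 hk).2]
  rw [← progression_zero_one, entS1_progression_eq_add_sum_entropyGain,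
    entS1_progression_eq_entropyGain_empty, add_div, sum_div]
  congr 1
  · push_cast
    field_simp
  · exact sum_congr rfl fun k hk => by rw [hpow k hk]; field_simp

end Dyadic

section DyadicLimit

variable {𝒜 : Type*} [Fintype 𝒜] [MeasurableSpace 𝒜] [MeasurableSingletonClass 𝒜]
  (μ : Measure (ℤ → 𝒜)) [IsProbabilityMeasure μ]

lemma exists_tendsto_entS1_Ico_div (hinv : TransInv1 μ) :
    ∃ s, Tendsto (fun n : ℕ => entS1 μ (Ico 0 (n : ℤ)) / n) atTop (𝓝 s) := by
  have hsub : Subadditive fun n : ℕ => entS1 μ (Ico 0 (n : ℤ)) := fun a b => by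
    have hsplit : Ico (0 : ℤ) ((a + b : ℕ) : ℤ)
        = Ico 0 (a : ℤ) ∪ (Ico (0 : ℤ) b).image (· + (a : ℤ)) := by
      rw [image_add_right_Ico, zero_add, Ico_union_Ico_eq_Ico (by positivity) (by omega),
        Nat.cast_add, add_comm]
    dsimp only
    rw [hsplit]
    exact (entS1_union_le μ _ _).trans_eq (by rw [entS1_image_add μ hinv])
  exact ⟨hsub.lim, hsub.tendsto_lim ⟨0, by
    rintro _ ⟨n, rfl⟩
    exact div_nonneg (entS1_nonneg μ _) n.cast_nonneg⟩⟩

lemma tendsto_entS1_Ico_two_pow_mul_div (hinv : TransInv1 μ) (m : ℕ) :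
    Tendsto (fun M : ℕ => entS1 μ (Ico 0 ((2 ^ m * M : ℕ) : ℤ)) / ((2 ^ m * M : ℕ) : ℝ)) atTop
      (𝓝 (1 / 2 ^ m * condEntLim μ {0} {x : ℤ | ∃ j : ℤ, j < 0 ∧ x = j * 2 ^ m}
        + ∑ k ∈ Icc 1 m, 1 / 2 ^ k * condEntLim μ {2 ^ (k - 1)}
          (negProgression (2 ^ (k - 1)) (2 ^ k) ∪ {x : ℤ | ∃ j : ℤ, x = j * 2 ^ k}))) := by
  have htop := tendsto_entropyGain_div μ hinv (E := ∅) (p := 2 ^ m) (by positivity)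
    (fun _ => rfl) 0
  have hL : negProgression 0 (2 ^ m) ∪ ∅ = {x : ℤ | ∃ j : ℤ, j < 0 ∧ x = j * 2 ^ m} := by
    ext
    simp [negProgression]
  rw [hL] at htop
  have hlevel : ∀ k ∈ Icc 1 m, Tendsto (fun M : ℕ =>
      entropyGain μ {x | ∃ j : ℤ, x = j * 2 ^ k} (2 ^ k) (2 ^ (k - 1)) (2 ^ (m - k) * M)
        / ((2 ^ (m - k) * M : ℕ) : ℝ)) atTop
      (𝓝 (condEntLim μ {2 ^ (k - 1)}
        (negProgression (2 ^ (k - 1)) (2 ^ k) ∪ {x : ℤ | ∃ j : ℤ, x = j * 2 ^ k}))) :=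
    fun k _ => (tendsto_entropyGain_div μ hinv (by positivity) (periodic_mem_multiples _) _).comp
      (tendsto_id.const_mul_atTop' (by positivity))
  refine ((htop.const_mul _).add (tendsto_finsetSum _ fun k hk =>
    (hlevel k hk).const_mul _)).congr' ?_
  filter_upwards [eventually_gt_atTop 0] with M hM
  exact (entS1_Ico_div_eq_sum μ m M hM).symm

end DyadicLimit

theorem entropy_density_hierarchical_general {𝒜 : Type*} [Fintype 𝒜]
    [MeasurableSpace 𝒜] [MeasurableSingletonClass 𝒜]
    (μ : Measure (ℤ → 𝒜)) [IsProbabilityMeasure μ] (hinv : TransInv1 μ)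
    (m : ℕ) :
    ∃ (s L : ℝ) (c : ℕ → ℝ),
      Filter.Tendsto (fun n : ℕ => entS1 μ (Finset.Ico (0 : ℤ) (n : ℤ)) / (n : ℝ))
        Filter.atTop (nhds s) ∧
      Filter.Tendsto
        (fun n : ℕ => condEnt1 μ {0}
          (interBox1 {x : ℤ | ∃ j : ℤ, j < 0 ∧ x = j * 2 ^ m} n))
        Filter.atTop (nhds L) ∧
      (∀ k, 1 ≤ k → k ≤ m →
        Filter.Tendsto
          (fun n : ℕ => condEnt1 μ {(2 : ℤ) ^ (k - 1)}
            (interBox1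
              ({x : ℤ | ∃ j : ℤ, j < 0 ∧ x = 2 ^ (k - 1) + j * 2 ^ k} ∪
                {x : ℤ | ∃ j : ℤ, x = j * 2 ^ k}) n))
          Filter.atTop (nhds (c k))) ∧
      s = (1 / 2 ^ m) * L + ∑ k ∈ Finset.Icc 1 m, (1 / 2 ^ k : ℝ) * c k := by
  obtain ⟨s, hs⟩ := exists_tendsto_entS1_Ico_div μ hinv
  refine ⟨s, condEntLim μ {0} {x : ℤ | ∃ j : ℤ, j < 0 ∧ x = j * 2 ^ m},
    fun k => condEntLim μ {2 ^ (k - 1)}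
      (negProgression (2 ^ (k - 1)) (2 ^ k) ∪ {x : ℤ | ∃ j : ℤ, x = j * 2 ^ k}),
    hs, tendsto_condEnt1_interBox1 μ _ _, fun k _ _ => tendsto_condEnt1_interBox1 μ _ _, ?_⟩
  exact tendsto_nhds_unique (hs.comp (tendsto_id.const_mul_atTop' (by positivity)))
    (tendsto_entS1_Ico_two_pow_mul_div μ hinv m)

/-- hierarchical decomposition. For a translation invariant probability
measure `μ` on `𝒜^ℤ` and `m ≥ 1`, with `G_k = 2^k ℤ` and `G_k^- = {j·2^k : j < 0}`, the
entropy density `s_μ = lim_n S({0,…,n−1})/n` exists and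
`s_μ = (1/2^m)·S({0} | G_m^-) + Σ_{k=1}^m (1/2^k)·S({2^{k−1}} | ({2^{k−1}} + G_k^-) ∪ G_k)`,
where conditional entropies with infinite conditioning sets are limits over growing finite
windows. -/
theorem entropy_density_hierarchical {𝒜 : Type*} [Fintype 𝒜] [Nonempty 𝒜]
    [MeasurableSpace 𝒜] [MeasurableSingletonClass 𝒜]
    (μ : Measure (ℤ → 𝒜)) [IsProbabilityMeasure μ] (hinv : TransInv1 μ)
    (m : ℕ) (hm : 1 ≤ m) :
    ∃ (s L : ℝ) (c : ℕ → ℝ),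
      Filter.Tendsto (fun n : ℕ => entS1 μ (Finset.Ico (0 : ℤ) (n : ℤ)) / (n : ℝ))
        Filter.atTop (nhds s) ∧
      Filter.Tendsto
        (fun n : ℕ => condEnt1 μ {0}
          (interBox1 {x : ℤ | ∃ j : ℤ, j < 0 ∧ x = j * 2 ^ m} n))
        Filter.atTop (nhds L) ∧
      (∀ k, 1 ≤ k → k ≤ m →
        Filter.Tendsto
          (fun n : ℕ => condEnt1 μ {(2 : ℤ) ^ (k - 1)}
            (interBox1
              ({x : ℤ | ∃ j : ℤ, j < 0 ∧ x = 2 ^ (k - 1) + j * 2 ^ k} ∪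
                {x : ℤ | ∃ j : ℤ, x = j * 2 ^ k}) n))
          Filter.atTop (nhds (c k))) ∧
      s = (1 / 2 ^ m) * L + ∑ k ∈ Finset.Icc 1 m, (1 / 2 ^ k : ℝ) * c k :=
  entropy_density_hierarchical_general μ hinv m
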